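/- As an identity of formal power series in four variables z₀, z₁, w₀, w₁: the sum over all pairs (λ, μ) of partitions of z₀^{o(λ)} z₁^{e(λ)} w₀^{o(μ)} w₁^{e(μ)}, specialized at z₀ = w₁ = x and z₁ = w₀ = y, equals ∏_{i=1}^{∞} (1 − (xy)^i)^{−2} (1 − x(xy)^{i−1})^{−1} (1 − y(xy)^{i−1})^{−1}. Equivalently, Σ_{(λ,μ)} x^{o(λ)+e(μ)} y^{e(λ)+o(μ)} = ∏_{i=1}^{∞} (1 − (xy)^i)^{−2} (1 − x(xy)^{i−1})^{−1} (1 − y(xy)^{i−1})^{−1}. -/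

import Mathlib

/-!
A partition is determined by the multiplicities of its parts, and a row of length `k` has
`⌈k/2⌉` boxes in odd columns and `⌊k/2⌋` in even ones. So a pair `(λ, μ)` is a finitely supported
multiplicity vector on two copies of the positive integers, a part `k` of `λ` weighing
`x^⌈k/2⌉ y^⌊k/2⌋` and a part `k` of `μ` weighing `x^⌊k/2⌋ y^⌈k/2⌉`, and the generating function is
`∏_{k ≥ 1} (1 - x^⌈k/2⌉ y^⌊k/2⌋)⁻¹ (1 - x^⌊k/2⌋ y^⌈k/2⌉)⁻¹`. The four factors with `k = 2i - 1`
and `k = 2i` are those of the `i`-th factor of the product. Parts larger than `m + n` do not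
affect the coefficient of `x^m y^n`, so the truncation at any `N ≥ m + n` is exact.
-/

/-- A partition: a weakly decreasing sequence of nonnegative integers with
finitely many nonzero terms. -/
structure CPartition where
  parts : ℕ → ℕ
  antitone : Antitone parts
  finite_support : Set.Finite {i : ℕ | parts i ≠ 0}

/-- The conjugate partition: `λ'_j = #{i : λ_i ≥ j}` (columns indexed from 1). -/
noncomputable def CPartition.conj (lam : CPartition) (j : ℕ) : ℕ :=
  Nat.card {i : ℕ | j ≤ lam.parts i}

/-- `o(λ) = Σ_{j odd} λ'_j`, the number of boxes of `λ` in odd-indexed columns. -/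
noncomputable def CPartition.oddCols (lam : CPartition) : ℕ :=
  ∑' j : ℕ, if Odd j then lam.conj j else 0

/-- `e(λ) = Σ_{j even, j ≥ 2} λ'_j`, the number of boxes of `λ` in even-indexed
columns. -/
noncomputable def CPartition.evenCols (lam : CPartition) : ℕ :=
  ∑' j : ℕ, if Even j ∧ j ≠ 0 then lam.conj j else 0

open Finset

theorem Finset.prod_Icc_one_two_mul {M : Type*} [CommMonoid M] (f : ℕ → M) (N : ℕ) :
    ∏ k ∈ Icc 1 (2 * N), f k = ∏ i ∈ Icc 1 N, (f (2 * i - 1) * f (2 * i)) := by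
  induction N with
  | zero => simp
  | succ N ih =>
    rw [show 2 * (N + 1) = 2 * N + 1 + 1 by ring, prod_Icc_succ_top (by omega),
      prod_Icc_succ_top (by omega), ih, prod_Icc_succ_top (by omega), mul_assoc,
      show 2 * (N + 1) - 1 = 2 * N + 1 by omega, show 2 * (N + 1) = 2 * N + 1 + 1 by ring]

theorem Nat.Ioc_filter_even_card (k : ℕ) : #{j ∈ Ioc 0 k | Even j ∧ j ≠ 0} = k / 2 := by
  rw [← Nat.Ioc_filter_dvd_card_eq_div k 2]
  refine congrArg card (filter_congr fun j hj => ?_)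
  simp [even_iff_two_dvd, (mem_Ioc.mp hj).1.ne']

theorem Nat.Ioc_filter_odd_card (k : ℕ) : #{j ∈ Ioc 0 k | Odd j} = (k + 1) / 2 := by
  have hsplit := card_filter_add_card_filter_not (s := Ioc 0 k) (fun j => Even j ∧ j ≠ 0)
  rw [Nat.Ioc_filter_even_card, Nat.card_Ioc] at hsplit
  rw [filter_congr fun j hj => show Odd j ↔ ¬(Even j ∧ j ≠ 0) by
    simp [(mem_Ioc.mp hj).1.ne']]
  omega

namespace Finsupp

variable {ι σ : Type*}

theorem nsmul_left_injective {d : σ →₀ ℕ} (hd : d ≠ 0) : Function.Injective fun n : ℕ => n • d := by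
  intro n n' h
  obtain ⟨s, hs⟩ := Finsupp.ne_iff.mp hd
  have hs' := DFunLike.congr_fun h s
  simp only [smul_apply, smul_eq_mul, coe_zero, Pi.zero_apply] at hs hs'
  exact Nat.eq_of_mul_eq_mul_right (Nat.pos_of_ne_zero hs) hs'

theorem exists_nsmul_eq_iff {d e : σ →₀ ℕ} :
    (∃ n : ℕ, n • d = e) ↔ e = 0 ∨ d ≤ e ∧ ∃ n : ℕ, n • d = e - d := by
  constructor
  · rintro ⟨_ | n, rfl⟩
    · simp
    · refine Or.inr ⟨?_, n, ?_⟩ <;> simp [succ_nsmul]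
  · rintro (rfl | ⟨hde, n, hn⟩)
    · exact ⟨0, zero_nsmul d⟩
    · exact ⟨n + 1, by rw [succ_nsmul, hn, tsub_add_cancel_of_le hde]⟩

theorem le_sum_nsmul_of_mem_support {a : ι →₀ ℕ} {d : ι → σ →₀ ℕ} {j : ι}
    (hj : j ∈ a.support) : d j ≤ a.sum fun j n => n • d j :=
  calc d j ≤ a j • d j := by
        obtain ⟨n, hn⟩ := Nat.exists_eq_add_of_le' (Nat.pos_of_ne_zero (mem_support_iff.mp hj))
        rw [hn, succ_nsmul]
        exact le_add_self
    _ ≤ a.sum fun j n => n • d j :=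
        Finset.single_le_sum (f := fun j => a j • d j) (fun _ _ => zero_le) hj

theorem single_zero_add_single_one_eq_iff {a b m n : ℕ} :
    single (0 : Fin 2) a + single 1 b = single 0 m + single 1 n ↔ a = m ∧ b = n := by
  refine ⟨fun h => ⟨?_, ?_⟩, fun ⟨ha, hb⟩ => ha ▸ hb ▸ rfl⟩
  · simpa using DFunLike.congr_fun h 0
  · simpa using DFunLike.congr_fun h 1

end Finsupp

open scoped Classical in
theorem Finset.card_filter_finsuppAntidiag_nsmul_eq {ι σ : Type*} (J : Finset ι)
    {d : ι → σ →₀ ℕ} (hd : ∀ j ∈ J, d j ≠ 0) (e : σ →₀ ℕ) :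
    #{l ∈ J.finsuppAntidiag e | ∀ j ∈ J, ∃ n : ℕ, n • d j = l j} =
      Nat.card {a : ι →₀ ℕ // a.support ⊆ J ∧ (a.sum fun j n => n • d j) = e} := by
  have hsum {a : ι →₀ ℕ} (ha : a.support ⊆ J) :
      (a.sum fun j n => n • d j) = ∑ j ∈ J, a j • d j :=
    Finsupp.sum_of_support_subset a ha _ fun _ _ => zero_smul ℕ _
  let scale (a : ι →₀ ℕ) : ι →₀ σ →₀ ℕ :=
    Finsupp.onFinset a.support (fun j => a j • d j) fun j hj => by
      contrapose! hj
      simp [Finsupp.notMem_support_iff.mp hj]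
  let F (a : {a : ι →₀ ℕ // a.support ⊆ J ∧ (a.sum fun j n => n • d j) = e}) :
      {l // l ∈ {l ∈ J.finsuppAntidiag e | ∀ j ∈ J, ∃ n : ℕ, n • d j = l j}} :=
    ⟨scale a, by
      obtain ⟨a, ha, hae⟩ := a
      simp only [mem_filter, mem_finsuppAntidiag]
      exact ⟨⟨by rw [← hae, hsum ha]; rfl, Finsupp.support_onFinset_subset.trans ha⟩,
        fun j _ => ⟨a j, rfl⟩⟩⟩
  have hF : Function.Bijective F := by
    constructor
    · rintro ⟨a, ha, _⟩ ⟨b, hb, _⟩ hab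
      ext j
      have hj := DFunLike.congr_fun (congrArg Subtype.val hab) j
      by_cases hjJ : j ∈ J
      · exact Finsupp.nsmul_left_injective (hd j hjJ) hj
      · rw [Finsupp.notMem_support_iff.mp (mt (@ha j) hjJ),
          Finsupp.notMem_support_iff.mp (mt (@hb j) hjJ)]
    · rintro ⟨l, hl⟩
      simp only [mem_filter, mem_finsuppAntidiag] at hl
      obtain ⟨⟨hle, hlJ⟩, hmul⟩ := hl
      choose n hn using hmul
      let a : ι →₀ ℕ := Finsupp.onFinset J (fun j => if h : j ∈ J then n j h else 0)
        fun j hj => by contrapose! hj; simp [hj]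
      have hal (j : ι) : a j • d j = l j := by
        by_cases hj : j ∈ J
        · simp [a, hj, hn]
        · simp [a, hj, Finsupp.notMem_support_iff.mp (mt (@hlJ j) hj)]
      have haJ : a.support ⊆ J := Finsupp.support_onFinset_subset
      refine ⟨⟨a, haJ, ?_⟩, Subtype.ext (Finsupp.ext hal)⟩
      rw [hsum haJ, ← hle]
      exact sum_congr rfl fun j _ => hal j
  rw [Nat.card_congr (Equiv.ofBijective F hF), Nat.card_eq_finsetCard]

namespace MvPowerSeries

variable {σ ι k : Type*} [Field k]

open scoped Classical in
theorem coeff_inv_one_sub_monomial {d : σ →₀ ℕ} (hd : d ≠ 0) (e : σ →₀ ℕ) :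
    coeff e (1 - monomial d (1 : k))⁻¹ = if ∃ n : ℕ, n • d = e then 1 else 0 := by
  -- the geometric series `∑ₙ X ^ (n • d)`, given by its coefficients
  let G : MvPowerSeries σ k := fun e => if ∃ n : ℕ, n • d = e then 1 else 0
  suffices h : (1 - monomial d (1 : k))⁻¹ = G from h ▸ rfl
  have hconst : constantCoeff (1 - monomial d (1 : k)) = 1 := by
    rw [map_sub, map_one, ← coeff_zero_eq_constantCoeff_apply, coeff_monomial, if_neg hd.symm,
      sub_zero]
  rw [MvPowerSeries.inv_eq_iff_mul_eq_one (by simp [hconst])]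
  ext e
  rw [mul_comm, sub_mul, one_mul, map_sub, coeff_monomial_mul, coeff_one, one_mul]
  change (if ∃ n : ℕ, n • d = e then (1 : k) else 0) -
    (if d ≤ e then (if ∃ n : ℕ, n • d = e - d then 1 else 0) else 0) = if e = 0 then 1 else 0
  have hexcl : ¬ (e = 0 ∧ d ≤ e) := fun ⟨he, hde⟩ => hd (le_antisymm (he ▸ hde) bot_le)
  rw [Finsupp.exists_nsmul_eq_iff]
  by_cases he : e = 0 <;> by_cases hde : d ≤ e <;> simp_all

theorem coeff_prod_inv_one_sub_monomial (J : Finset ι) {d : ι → σ →₀ ℕ}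
    (hd : ∀ j ∈ J, d j ≠ 0) (e : σ →₀ ℕ) :
    coeff e (∏ j ∈ J, (1 - monomial (d j) 1 : MvPowerSeries σ k)⁻¹) =
      Nat.card {a : ι →₀ ℕ // a.support ⊆ J ∧ (a.sum fun j n => n • d j) = e} := by
  classical
  rw [← Finset.card_filter_finsuppAntidiag_nsmul_eq J hd, coeff_prod,
    Finset.sum_congr rfl fun l _ => (Finset.prod_congr rfl fun j hj =>
      coeff_inv_one_sub_monomial (hd j hj) (l j)).trans Finset.prod_boole,
    Finset.sum_boole]

end MvPowerSeries

namespace CPartition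

@[ext]
theorem ext {p q : CPartition} (h : p.parts = q.parts) : p = q := by
  cases p; cases q; simpa using h

theorem exists_parts_eq_zero (lam : CPartition) : ∃ i, lam.parts i = 0 := by
  obtain ⟨i, hi⟩ := lam.finite_support.exists_notMem
  exact ⟨i, by simpa using hi⟩

def length (lam : CPartition) : ℕ := Nat.find lam.exists_parts_eq_zero

theorem parts_ne_zero_iff (lam : CPartition) {i : ℕ} : lam.parts i ≠ 0 ↔ i < lam.length := by
  refine ⟨fun h => ?_, Nat.find_min lam.exists_parts_eq_zero⟩
  by_contra! hle
  exact h (Nat.eq_zero_of_le_zero <|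
    (lam.antitone hle).trans (Nat.find_spec lam.exists_parts_eq_zero).le)

theorem length_eq_of_forall {lam : CPartition} {n : ℕ}
    (h : ∀ i, lam.parts i ≠ 0 ↔ i < n) : lam.length = n := by
  refine le_antisymm ?_ ?_ <;> by_contra! hlt
  · exact (h n).not.mpr (lt_irrefl n) (lam.parts_ne_zero_iff.mpr hlt)
  · exact lam.parts_ne_zero_iff.not.mpr (lt_irrefl _) ((h _).mpr hlt)

theorem conj_eq_card (lam : CPartition) {j : ℕ} (hj : j ≠ 0) :
    lam.conj j = #{i ∈ range lam.length | j ≤ lam.parts i} := by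
  rw [conj, ← Nat.card_eq_finsetCard, ← coe_sort_coe]
  congr
  ext i
  simp only [Finset.mem_val, mem_filter, mem_range, ← lam.parts_ne_zero_iff]
  omega

/-- Double counting the boxes in the columns `j` with `p j`: a row of length `k` meets the
columns `1, …, k`. -/
theorem tsum_ite_conj (lam : CPartition) (p : ℕ → Prop) [DecidablePred p] (hp : ¬ p 0) :
    (∑' j, if p j then lam.conj j else 0) =
      ∑ i ∈ range lam.length, #{j ∈ Ioc 0 (lam.parts i) | p j} := by
  have hparts (i : ℕ) : lam.parts i ≤ lam.parts 0 := lam.antitone (Nat.zero_le i)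
  rw [tsum_eq_sum (s := Ioc 0 (lam.parts 0)) fun j hj => by
    rcases Nat.eq_zero_or_pos j with rfl | hj0
    · simp [hp]
    · have hlt : lam.parts 0 < j := by simpa [hj0] using hj
      simp [lam.conj_eq_card hj0.ne', fun i => (hparts i).trans_lt hlt]]
  rw [← sum_filter, sum_congr rfl fun j hj => lam.conj_eq_card (by simp at hj; omega)]
  refine (sum_card_bipartiteAbove_eq_sum_card_bipartiteBelow (fun j i => j ≤ lam.parts i)).trans ?_
  refine sum_congr rfl fun i _ => congrArg card ?_
  ext j
  simp only [bipartiteBelow, mem_filter, mem_Ioc]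
  exact ⟨fun ⟨⟨⟨h0, _⟩, hpj⟩, hj⟩ => ⟨⟨h0, hj⟩, hpj⟩,
    fun ⟨⟨h0, hj⟩, hpj⟩ => ⟨⟨⟨h0, hj.trans (hparts i)⟩, hpj⟩, hj⟩⟩

theorem oddCols_eq_sum (lam : CPartition) :
    lam.oddCols = ∑ i ∈ range lam.length, (lam.parts i + 1) / 2 := by
  rw [oddCols, tsum_ite_conj lam _ (by decide)]
  exact sum_congr rfl fun i _ => Nat.Ioc_filter_odd_card _

theorem evenCols_eq_sum (lam : CPartition) :
    lam.evenCols = ∑ i ∈ range lam.length, lam.parts i / 2 := by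
  rw [evenCols, tsum_ite_conj lam _ (by simp)]
  exact sum_congr rfl fun i _ => Nat.Ioc_filter_even_card _

def toMultiset (lam : CPartition) : Multiset ℕ := (Multiset.range lam.length).map lam.parts

def ofMultiset (s : Multiset ℕ) : CPartition where
  parts i := (s.sort (· ≥ ·)).getD i 0
  antitone i j hij := by
    have hsorted : (s.sort (· ≥ ·)).SortedGE := (s.pairwise_sort _).sortedGE
    dsimp only
    rcases lt_or_ge j (s.sort (· ≥ ·)).length with hj | hj
    · rw [List.getD_eq_getElem _ _ hj, List.getD_eq_getElem _ _ (hij.trans_lt hj)]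
      exact hsorted.getElem_ge_getElem_of_le hij
    · exact (List.getD_eq_default _ _ hj).trans_le (Nat.zero_le _)
  finite_support := (Set.finite_Iio (s.sort (· ≥ ·)).length).subset fun i hi => by
    by_contra h
    exact hi (List.getD_eq_default _ _ (not_lt.mp h))

theorem ofMultiset_toMultiset (lam : CPartition) : ofMultiset lam.toMultiset = lam := by
  have hsort : lam.toMultiset.sort (· ≥ ·) = (List.range lam.length).map lam.parts := by
    rw [toMultiset, ← Multiset.coe_range, Multiset.map_coe, Multiset.coe_sort]
    exact List.mergeSort_eq_self _ (List.pairwise_lt_range.map _ fun a b h => lam.antitone h.le)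
  ext i
  change (lam.toMultiset.sort (· ≥ ·)).getD i 0 = lam.parts i
  rw [hsort]
  by_cases hi : i < lam.length
  · rw [List.getD_eq_getElem _ _ (by simpa using hi), List.getElem_map, List.getElem_range]
  · rw [List.getD_eq_default _ _ (by simpa using hi)]
    exact (not_not.mp (mt lam.parts_ne_zero_iff.mp hi)).symm

theorem toMultiset_ofMultiset {s : Multiset ℕ} (hs : 0 ∉ s) : (ofMultiset s).toMultiset = s := by
  set L := s.sort (· ≥ ·) with hL
  have hparts (i : ℕ) : (ofMultiset s).parts i = L.getD i 0 := rfl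
  have hlen : (ofMultiset s).length = L.length := length_eq_of_forall fun i => by
    rw [hparts]
    rcases lt_or_ge i L.length with hi | hi
    · rw [List.getD_eq_getElem _ _ hi]
      refine iff_of_true (fun h => hs ?_) hi
      rw [← h, ← Multiset.mem_sort (· ≥ ·), ← hL]
      exact List.getElem_mem hi
    · exact iff_of_false (fun h => h (List.getD_eq_default _ _ hi)) (not_lt.mpr hi)
  rw [toMultiset, hlen, ← Multiset.coe_range, Multiset.map_coe]
  conv_rhs => rw [← s.sort_eq (· ≥ ·), ← hL]
  refine congrArg _ (List.ext_getElem (by simp) fun i h₁ h₂ => ?_)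
  rw [List.getElem_map, List.getElem_range, hparts, List.getD_eq_getElem _ _ h₂]

noncomputable def mult (lam : CPartition) : ℕ →₀ ℕ := Multiset.toFinsupp lam.toMultiset

theorem mult_injective : Function.Injective mult := fun p q h => by
  rw [← ofMultiset_toMultiset p, ← ofMultiset_toMultiset q, Multiset.toFinsupp.injective h]

theorem exists_mult_eq {c : ℕ →₀ ℕ} (hc : c 0 = 0) : ∃ lam : CPartition, lam.mult = c := by
  refine ⟨ofMultiset (Finsupp.toMultiset c), ?_⟩
  rw [mult, toMultiset_ofMultiset (by simpa using hc), Finsupp.toMultiset_toFinsupp]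

theorem mult_zero (lam : CPartition) : lam.mult 0 = 0 := by
  simp [mult, toMultiset, parts_ne_zero_iff]

theorem mult_sum_nsmul {M : Type*} [AddCommMonoid M] (lam : CPartition) (f : ℕ → M) :
    (lam.mult.sum fun k n => n • f k) = ∑ i ∈ range lam.length, f (lam.parts i) := by
  classical
  rw [Finsupp.sum, mult, Multiset.toFinsupp_support]
  simp only [Multiset.toFinsupp_apply]
  rw [← sum_multiset_map_count, toMultiset, Multiset.map_map, sum_eq_multiset_sum, range_val]
  rfl

end CPartition

/-- The exponent of `x_a ^ ⌈k/2⌉ * x_b ^ ⌊k/2⌋`: a row of length `k` whose odd columns have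
colour `a` and whose even columns have colour `b`. -/
noncomputable def rowWeight {σ : Type*} (a b : σ) (k : ℕ) : σ →₀ ℕ :=
  Finsupp.single a ((k + 1) / 2) + Finsupp.single b (k / 2)

theorem degree_rowWeight {σ : Type*} (a b : σ) (k : ℕ) : (rowWeight a b k).degree = k := by
  rw [rowWeight, map_add, Finsupp.degree_single, Finsupp.degree_single]
  omega

theorem monomial_rowWeight {σ R : Type*} [CommSemiring R] (a b : σ) (k : ℕ) :
    MvPowerSeries.monomial (rowWeight a b k) (1 : R) =
      MvPowerSeries.X a ^ ((k + 1) / 2) * MvPowerSeries.X b ^ (k / 2) := by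
  rw [MvPowerSeries.X_pow_eq, MvPowerSeries.X_pow_eq, MvPowerSeries.monomial_mul_monomial,
    one_mul, rowWeight]

theorem CPartition.mult_sum_rowWeight {σ : Type*} (lam : CPartition) (a b : σ) :
    (lam.mult.sum fun k n => n • rowWeight a b k) =
      Finsupp.single a lam.oddCols + Finsupp.single b lam.evenCols := by
  rw [lam.mult_sum_nsmul, oddCols_eq_sum, evenCols_eq_sum, Finsupp.single_finsetSum,
    Finsupp.single_finsetSum, ← sum_add_distrib]
  rfl

/-- `inl k` stands for a part `k` of `λ`, `inr k` for a part `k` of `μ`, whose colouring starts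
with the other colour. -/
noncomputable def vermaWeight : ℕ ⊕ ℕ → Fin 2 →₀ ℕ := Sum.elim (rowWeight 0 1) (rowWeight 1 0)

theorem degree_vermaWeight (j : ℕ ⊕ ℕ) : (vermaWeight j).degree = Sum.elim id id j := by
  cases j <;> exact degree_rowWeight _ _ _

theorem prod_inv_factor_eq_prod_vermaWeight (N : ℕ) :
    (∏ i ∈ Icc 1 N,
      (((1 - (MvPowerSeries.X 0 * MvPowerSeries.X 1) ^ i) ^ 2 *
        (1 - MvPowerSeries.X 0 * (MvPowerSeries.X 0 * MvPowerSeries.X 1) ^ (i - 1)) *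
        (1 - MvPowerSeries.X 1 * (MvPowerSeries.X 0 * MvPowerSeries.X 1) ^ (i - 1)))⁻¹ :
          MvPowerSeries (Fin 2) ℚ)) =
      ∏ j ∈ (Icc 1 (2 * N)).disjSum (Icc 1 (2 * N)),
        (1 - MvPowerSeries.monomial (vermaWeight j) 1)⁻¹ := by
  rw [prod_disjSum, ← prod_mul_distrib, prod_Icc_one_two_mul]
  refine prod_congr rfl fun i hi => ?_
  obtain ⟨i, rfl⟩ : ∃ i', i = i' + 1 := ⟨i - 1, by simp at hi; omega⟩
  simp only [vermaWeight, Sum.elim_inl, Sum.elim_inr, monomial_rowWeight,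
    show (2 * (i + 1) - 1 + 1) / 2 = i + 1 by omega, show (2 * (i + 1) - 1) / 2 = i by omega,
    show (2 * (i + 1) + 1) / 2 = i + 1 by omega, show 2 * (i + 1) / 2 = i + 1 by omega,
    add_tsub_cancel_right, MvPowerSeries.mul_inv_rev, sq]
  ring_nf

noncomputable def pairMult (p : CPartition × CPartition) : ℕ ⊕ ℕ →₀ ℕ := p.1.mult.sumElim p.2.mult

theorem pairMult_injective : Function.Injective pairMult := fun p q h =>
  Prod.ext (CPartition.mult_injective (by ext k; exact DFunLike.congr_fun h (.inl k)))
    (CPartition.mult_injective (by ext k; exact DFunLike.congr_fun h (.inr k)))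

theorem exists_pairMult_eq {a : ℕ ⊕ ℕ →₀ ℕ} (ha : a (.inl 0) = 0 ∧ a (.inr 0) = 0) :
    ∃ p, pairMult p = a := by
  obtain ⟨lam, hlam⟩ := CPartition.exists_mult_eq
    (c := a.comapDomain Sum.inl Sum.inl_injective.injOn) ha.1
  obtain ⟨mu, hmu⟩ := CPartition.exists_mult_eq
    (c := a.comapDomain Sum.inr Sum.inr_injective.injOn) ha.2
  exact ⟨(lam, mu), by simp only [pairMult, hlam, hmu, Finsupp.comapDomain_sumElim_comapDomain]⟩

theorem sum_pairMult_vermaWeight (p : CPartition × CPartition) :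
    ((pairMult p).sum fun j k => k • vermaWeight j) =
      Finsupp.single 0 (p.1.oddCols + p.2.evenCols) +
        Finsupp.single 1 (p.1.evenCols + p.2.oddCols) := by
  rw [pairMult, Finsupp.sum_sumElim]
  simp only [Function.comp_def, vermaWeight, Sum.elim_inl, Sum.elim_inr,
    CPartition.mult_sum_rowWeight, Finsupp.single_add]
  abel

theorem support_subset_of_sum_vermaWeight_eq {a : ℕ ⊕ ℕ →₀ ℕ} {m n N : ℕ} (hN : m + n ≤ N)
    (ha : a (.inl 0) = 0 ∧ a (.inr 0) = 0)
    (hsum : (a.sum fun j k => k • vermaWeight j) = Finsupp.single 0 m + Finsupp.single 1 n) :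
    a.support ⊆ (Icc 1 (2 * N)).disjSum (Icc 1 (2 * N)) := fun j hj => by
  have hdeg := Finsupp.degree_mono (Finsupp.le_sum_nsmul_of_mem_support (d := vermaWeight) hj)
  rw [hsum, degree_vermaWeight, map_add, Finsupp.degree_single, Finsupp.degree_single] at hdeg
  rcases j with k | k
  all_goals
    have hk : k ≠ 0 := by rintro rfl; simp_all
    simp only [inl_mem_disjSum, inr_mem_disjSum, mem_Icc, Sum.elim_inl, Sum.elim_inr, id] at hdeg ⊢
    omega

theorem card_pairs_eq_card_vermaWeight {m n N : ℕ} (hN : m + n ≤ N) :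
    Nat.card {p : CPartition × CPartition //
        p.1.oddCols + p.2.evenCols = m ∧ p.1.evenCols + p.2.oddCols = n} =
      Nat.card {a : ℕ ⊕ ℕ →₀ ℕ // a.support ⊆ (Icc 1 (2 * N)).disjSum (Icc 1 (2 * N)) ∧
        (a.sum fun j k => k • vermaWeight j) = Finsupp.single 0 m + Finsupp.single 1 n} := by
  have hcond (p : CPartition × CPartition) :
      (p.1.oddCols + p.2.evenCols = m ∧ p.1.evenCols + p.2.oddCols = n) ↔
        ((pairMult p).sum fun j k => k • vermaWeight j) =
          Finsupp.single 0 m + Finsupp.single 1 n := by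
    rw [sum_pairMult_vermaWeight, Finsupp.single_zero_add_single_one_eq_iff]
  have hzero (p : CPartition × CPartition) :
      pairMult p (.inl 0) = 0 ∧ pairMult p (.inr 0) = 0 :=
    ⟨p.1.mult_zero, p.2.mult_zero⟩
  refine Nat.card_congr (Equiv.ofBijective
    (fun p => ⟨pairMult p.1, support_subset_of_sum_vermaWeight_eq hN (hzero p.1)
      ((hcond p.1).mp p.2), (hcond p.1).mp p.2⟩) ⟨fun p q h => ?_, fun ⟨a, hJ, hsum⟩ => ?_⟩)
  · exact Subtype.ext (pairMult_injective (congrArg Subtype.val h))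
  · have hJ0 {j} (hj : j ∉ (Icc 1 (2 * N)).disjSum (Icc 1 (2 * N))) : a j = 0 :=
      Finsupp.notMem_support_iff.mp (mt (@hJ j) hj)
    obtain ⟨p, rfl⟩ := exists_pairMult_eq ⟨hJ0 (by simp), hJ0 (by simp)⟩
    exact ⟨⟨p, (hcond p).mpr hsum⟩, rfl⟩

/-- The character of the evaluation Verma module `G₀^μ` (pairs of two-colored
vertical partitions with opposite starting colors):
`Σ_{(λ,μ)} x^{o(λ)+e(μ)} y^{e(λ)+o(μ)}
  = ∏_{i≥1} (1-(xy)^i)⁻² (1-x(xy)^{i-1})⁻¹ (1-y(xy)^{i-1})⁻¹`,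
stated coefficientwise (any truncation `N ≥ m + n` of the infinite product
computes the coefficient of `x^m y^n`). -/
theorem verma_module_character (m n : ℕ) (N : ℕ) (hN : m + n ≤ N) :
    MvPowerSeries.coeff (R := ℚ) (Finsupp.single 0 m + Finsupp.single 1 n)
      (∏ i ∈ Finset.Icc 1 N,
        (((1 - (MvPowerSeries.X 0 * MvPowerSeries.X 1) ^ i) ^ 2 *
          (1 - MvPowerSeries.X 0 * (MvPowerSeries.X 0 * MvPowerSeries.X 1) ^ (i - 1)) *
          (1 - MvPowerSeries.X 1 * (MvPowerSeries.X 0 * MvPowerSeries.X 1) ^ (i - 1)))⁻¹ :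
            MvPowerSeries (Fin 2) ℚ))
    = Nat.card {p : CPartition × CPartition //
        p.1.oddCols + p.2.evenCols = m ∧ p.1.evenCols + p.2.oddCols = n} := by
  have hweight (j) (hj : j ∈ (Icc 1 (2 * N)).disjSum (Icc 1 (2 * N))) : vermaWeight j ≠ 0 := by
    intro h
    have hdeg := degree_vermaWeight j
    rw [h, map_zero] at hdeg
    rcases j with k | k <;>
      simp only [inl_mem_disjSum, inr_mem_disjSum, mem_Icc, Sum.elim_inl, Sum.elim_inr, id]
        at hj hdeg <;>
      omega
  rw [prod_inv_factor_eq_prod_vermaWeight, MvPowerSeries.coeff_prod_inv_one_sub_monomial _ hweight,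
    card_pairs_eq_card_vermaWeight hN]
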